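/- Addition theorem for extended supports: for any two degrees d and d′, Δ̃(d + d′) = Δ̃(d) ∪ Δ̃(d′). -/

import Mathlib

/-!
Common setup: a finite crystallographic root system `R` spanning a Euclidean space `E`,
with a base of simple roots, positive roots, Weyl group, Bruhat order, Hecke (Demazure)
product, degrees, greedy decompositions, extended supports, minimal degrees and
generalized cascades of orthogonal roots, following the conventions of the paper.
-/

open scoped RealInnerProductSpace BigOperators

attribute [local instance] Classical.propDecidable

noncomputable section

variable {E : Type} [NormedAddCommGroup E] [InnerProductSpace ℝ E] [FiniteDimensional ℝ E]

/-- The reflection `s_α` along a root `α` (the orthogonal reflection fixing the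
hyperplane orthogonal to `α`). -/
def sRefl (α : E) : E ≃ₗᵢ[ℝ] E := Submodule.reflection (Submodule.span ℝ {α})ᗮ

/-- The coroot `α^∨ = 2α/(α,α)`. -/
def coroot (α : E) : E := (2 / ⟪α, α⟫) • α

/-- `x` is a nonnegative integral combination of elements of `Δ`. -/
def nonnegComb (Δ : Finset E) (x : E) : Prop :=
  ∃ c : E → ℕ, x = ∑ β ∈ Δ, (c β : ℝ) • β

/-- `x` lies in the `ℤ`-span of `T`. -/
def inZSpan (T : Finset E) (x : E) : Prop :=
  ∃ c : E → ℤ, x = ∑ β ∈ T, (c β : ℝ) • β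

/-- A finite crystallographic (reduced) root system spanning `E`, together with a base:
`R` is the set of roots, `simples` the set of simple roots, `pos` the set of positive
roots. -/
structure RootSystemData (E : Type) [NormedAddCommGroup E] [InnerProductSpace ℝ E]
    [FiniteDimensional ℝ E] where
  R : Finset E
  simples : Finset E
  pos : Finset E
  zero_not_mem : (0 : E) ∉ R
  span_top : Submodule.span ℝ (R : Set E) = ⊤
  neg_mem : ∀ α ∈ R, -α ∈ R
  reduced : ∀ α ∈ R, ∀ t : ℝ, t • α ∈ R → t = 1 ∨ t = -1
  crystallographic : ∀ α ∈ R, ∀ β ∈ R, ∃ n : ℤ, ⟪β, coroot α⟫ = (n : ℝ)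
  refl_mem : ∀ α ∈ R, ∀ β ∈ R, sRefl α β ∈ R
  simples_subset : simples ⊆ pos
  pos_subset : pos ⊆ R
  lin_indep : LinearIndependent ℝ (fun β : simples => (β : E))
  pos_iff : ∀ α ∈ R, (α ∈ pos ↔ nonnegComb simples α)
  pos_or_neg : ∀ α ∈ R, α ∈ pos ∨ -α ∈ pos
  coroot_comb : ∀ α ∈ pos, ∃ c : E → ℕ, coroot α = ∑ β ∈ simples, (c β : ℝ) • coroot β

variable (S : RootSystemData E)

/-- The partial order on roots: `α ≤ α'` iff `α' - α` is a nonnegative combination of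
simple roots. -/
def rootLE (α α' : E) : Prop := nonnegComb S.simples (α' - α)

/-- The partial order on coroots: `corootLE S α α'` means `α^∨ ≤ α'^∨` in `ℤΔ^∨`. -/
def corootLE (α α' : E) : Prop :=
  ∃ c : E → ℕ, coroot α' - coroot α = ∑ β ∈ S.simples, (c β : ℝ) • coroot β

/-- The support `Δ(α)` of a root: the set of simple roots `β` with `β ≤ α`. -/
def suppR (α : E) : Finset E := S.simples.filter fun β => rootLE S β α

/-- The root subsystem `R(α)` of `R` generated by the support `Δ(α)`. -/
def subsysOf (α : E) : Finset E := S.R.filter fun μ => inZSpan (suppR S α) μ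

/-- A positive root `φ` is locally high if it is the highest root of `R(φ)`. -/
def IsLocallyHigh (φ : E) : Prop :=
  φ ∈ S.pos ∧ ∀ μ ∈ subsysOf S φ, rootLE S μ φ

/-- Two roots are strongly orthogonal if neither their sum nor their difference lies
in `R ∪ {0}`. -/
def StronglyOrthogonal (α α' : E) : Prop :=
  α + α' ∉ S.R ∧ α - α' ∉ S.R ∧ α + α' ≠ 0 ∧ α - α' ≠ 0

/-- Two sets of roots are totally disjoint if each element of one is strongly
orthogonal to each element of the other. -/
def TotallyDisjoint (A B : Finset E) : Prop :=
  ∀ a ∈ A, ∀ b ∈ B, StronglyOrthogonal S a b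

/-- Adjacency in the Dynkin diagram: distinct and not orthogonal. -/
def DynkinAdj (β β' : E) : Prop := β ≠ β' ∧ ⟪β, β'⟫ ≠ 0

/-- A set of simple roots is connected (as a subset of the Dynkin diagram). -/
def DynkinConnected (C : Finset E) : Prop :=
  ∀ β ∈ C, ∀ β' ∈ C,
    Relation.ReflTransGen (fun x y => x ∈ C ∧ y ∈ C ∧ DynkinAdj x y) β β'

/-- `C` is a connected component of `A` (as subsets of the Dynkin diagram): a maximal
connected subset of `A`. -/
def IsConnComponent (A C : Finset E) : Prop :=
  C.Nonempty ∧ C ⊆ A ∧ DynkinConnected C ∧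
    ∀ C', C ⊆ C' → C' ⊆ A → DynkinConnected C' → C' = C

/-- `R_P^+`, the set of positive roots lying in `ℤΔ_P`. -/
def posP (ΔP : Finset E) : Finset E := S.pos.filter fun γ => inZSpan ΔP γ

/-- The (nonnegative integral) coefficients of the coroot `α^∨` in the basis of simple
coroots. -/
def corootCoeffs (α : E) : E → ℕ :=
  if h : ∃ c : E → ℕ, (∀ β, β ∉ S.simples → c β = 0) ∧
      coroot α = ∑ β ∈ S.simples, (c β : ℝ) • coroot β
  then h.choose else fun _ => 0

/-- The degree `d(α) = α^∨ + ℤΔ_P^∨`, recorded as the coefficient function on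
`Δ ∖ Δ_P` (a degree is an element of `ℤΔ^∨/ℤΔ_P^∨` with nonnegative coefficients,
i.e. a function `Δ ∖ Δ_P → ℕ`). -/
def degOf (ΔP : Finset E) (α : E) : E → ℕ :=
  fun β => if β ∈ ΔP then 0 else corootCoeffs S α β

/-- A degree: a nonnegative coefficient function supported on `Δ ∖ Δ_P`.  Degrees are
ordered coefficientwise (pointwise). -/
def IsDegree (ΔP : Finset E) (d : E → ℕ) : Prop :=
  ∀ β, β ∉ S.simples \ ΔP → d β = 0

/-- `α` is a maximal root of the degree `d`: a maximal element of
`{α ∈ R⁺ ∖ R_P⁺ : d(α) ≤ d}`. -/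
def IsMaxRoot (ΔP : Finset E) (d : E → ℕ) (α : E) : Prop :=
  α ∈ S.pos ∧ α ∉ posP S ΔP ∧ degOf S ΔP α ≤ d ∧
    ∀ α', α' ∈ S.pos → α' ∉ posP S ΔP → degOf S ΔP α' ≤ d → rootLE S α α' → α' = α

/-- A root `α ∈ R⁺ ∖ R_P⁺` is `P`-cosmall if it is a maximal root of the degree
`d(α)`. -/
def PCosmall (ΔP : Finset E) (α : E) : Prop :=
  IsMaxRoot S ΔP (degOf S ΔP α) α

/-- `IsGreedy S ΔP l d`: the list `l` is a greedy decomposition of the degree `d`. -/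
def IsGreedy (S : RootSystemData E) (ΔP : Finset E) : List E → (E → ℕ) → Prop
  | [], d => d = fun _ => 0
  | α :: t, d => IsMaxRoot S ΔP d α ∧ IsGreedy S ΔP t (d - degOf S ΔP α)

/-- The extended support determined by a (greedy) decomposition: the union of the
supports of its entries. -/
def extSuppOf (l : List E) : Finset E := l.foldr (fun α s => suppR S α ∪ s) ∅

/-- The Weyl group: the subgroup of linear isometries generated by the reflections in
the roots. -/
def weylGroup : Subgroup (E ≃ₗᵢ[ℝ] E) :=
  Subgroup.closure {g | ∃ α ∈ S.R, g = sRefl α}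

/-- The inversion set `I(w) = {γ ∈ R⁺ : w(γ) ∈ -R⁺}`. -/
def invSet (w : E ≃ₗᵢ[ℝ] E) : Finset E := S.pos.filter fun γ => -(w γ) ∈ S.pos

/-- The length of a Weyl group element: the cardinality of its inversion set. -/
def len (w : E ≃ₗᵢ[ℝ] E) : ℕ := (invSet S w).card

/-- The Bruhat order on the Weyl group: generated by multiplication by reflections
which increases length. -/
def bruhatLE (u v : E ≃ₗᵢ[ℝ] E) : Prop :=
  Relation.ReflTransGen (fun x y => (∃ α ∈ S.R, y = x * sRefl α) ∧ len S x < len S y) u v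

/-- The support `Δ(w) = {β ∈ Δ : s_β ⪯ w}` of a Weyl group element. -/
def suppW (w : E ≃ₗᵢ[ℝ] E) : Finset E := S.simples.filter fun β => bruhatLE S (sRefl β) w

/-- The Hecke (Demazure) product: `hecke S u v` is the Bruhat-maximum of
`{u'v' : u' ⪯ u, v' ⪯ v}` (this characterizes the usual Hecke product `u · v` defined
via reduced words). -/
def hecke (u v : E ≃ₗᵢ[ℝ] E) : E ≃ₗᵢ[ℝ] E :=
  if h : ∃ w, (∃ u' v', bruhatLE S u' u ∧ bruhatLE S v' v ∧ w = u' * v') ∧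
      ∀ w', (∃ u' v', bruhatLE S u' u ∧ bruhatLE S v' v ∧ w' = u' * v') → bruhatLE S w' w
  then h.choose else u * v

/-- The Hecke product `g₁ · g₂ · … · gₙ` of a list of Weyl group elements. -/
def heckeFold (l : List (E ≃ₗᵢ[ℝ] E)) : E ≃ₗᵢ[ℝ] E := l.foldl (hecke S) 1

/-- The Hecke product `s_{α₁} · … · s_{αᵣ}` of the reflections along a list of roots. -/
def heckeWord (l : List E) : E ≃ₗᵢ[ℝ] E := heckeFold S (l.map sRefl)

/-- The parabolic subgroup `W_P` of the Weyl group. -/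
def parabolicW (ΔP : Finset E) : Subgroup (E ≃ₗᵢ[ℝ] E) :=
  Subgroup.closure {g | ∃ β ∈ ΔP, g = sRefl β}

/-- The longest element `w_P` of the parabolic subgroup `W_P`. -/
def longestWP (ΔP : Finset E) : E ≃ₗᵢ[ℝ] E :=
  if h : ∃ w ∈ parabolicW ΔP, ∀ w' ∈ parabolicW ΔP, len S w' ≤ len S w
  then h.choose else 1

/-- A choice of greedy decomposition of the degree `d` (the greedy decomposition is
unique up to reordering). -/
def greedyOf (ΔP : Finset E) (d : E → ℕ) : List E :=
  if h : ∃ l, IsGreedy S ΔP l d then h.choose else []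

/-- The element `z_d^P`, determined by `z_d^P w_P = s_{α₁} · … · s_{αᵣ} · w_P` for a
greedy decomposition `(α₁, …, αᵣ)` of `d`. -/
def zP (ΔP : Finset E) (d : E → ℕ) : E ≃ₗᵢ[ℝ] E :=
  heckeFold S ((greedyOf S ΔP d).map sRefl ++ [longestWP S ΔP]) * (longestWP S ΔP)⁻¹

/-- `d ∈ Π_P`: `d` is a minimal degree, i.e. a minimal element of
`{d' : z_d^P ⪯ z_{d'}^P}`. -/
def MemPiP (ΔP : Finset E) (d : E → ℕ) : Prop :=
  IsDegree S ΔP d ∧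
    ∀ d', IsDegree S ΔP d' → bruhatLE S (zP S ΔP d) (zP S ΔP d') → d' ≤ d → d' = d

/-- The element `z_e^B = s_{α₁} · … · s_{αᵣ}` (Hecke product) for a greedy
decomposition `(α₁, …, αᵣ)` of the degree `e ∈ H₂(G/B)`. -/
def zB (e : E → ℕ) : E ≃ₗᵢ[ℝ] E := heckeWord S (greedyOf S ∅ e)

/-- `e ∈ Π_B`: `e` is a minimal degree in `H₂(G/B)`. -/
def MemPiB (e : E → ℕ) : Prop :=
  IsDegree S ∅ e ∧
    ∀ e', IsDegree S ∅ e' → bruhatLE S (zB S e) (zB S e') → e' ≤ e → e' = e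

/-- The generalized cascade of orthogonal roots `B_{R,e}`: the set of positive roots
occurring in a greedy decomposition of `e`. -/
def cascade (e : E → ℕ) : Finset E :=
  S.pos.filter fun α => ∃ l, IsGreedy S ∅ l e ∧ α ∈ l

/-- The generalized chain cascade `C_{R,e}(φ) = {α ∈ B_{R,e} : α ≥ φ}`. -/
def chainCascade (e : E → ℕ) (φ : E) : Finset E :=
  (cascade S e).filter fun α => rootLE S φ α

end

/-!
A greedy decomposition of `d` consists of maximal roots, and a maximal root `α` absorbs every
`β ∈ Δ_P` adjacent to its support: otherwise `s_β α` has the same degree as `α` and lies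
strictly above it. As the support of a root is connected in the Dynkin diagram and, for
`α ∉ R_P`, meets `Δ ∖ Δ_P`, the extended support of `d` is the set of simple roots reachable
from `{γ : 0 < d γ}` along Dynkin edges that enter `Δ_P`. This description is additive in `d`.
-/

section

variable {E : Type} [NormedAddCommGroup E] [InnerProductSpace ℝ E]

lemma real_inner_coroot (x γ : E) : ⟪x, coroot γ⟫ = 2 * ⟪x, γ⟫ / ⟪γ, γ⟫ := by
  rw [coroot, real_inner_smul_right]
  ring

lemma sRefl_apply (γ x : E) : sRefl γ x = x - ⟪x, coroot γ⟫ • γ := by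
  rw [sRefl, Submodule.reflection_orthogonal_apply, Submodule.reflection_singleton_apply,
    real_inner_coroot, real_inner_self_eq_norm_sq, real_inner_comm]
  module

lemma dynkinConnected_singleton (β : E) : DynkinConnected ({β} : Finset E) := by
  intro x hx y hy
  rw [Finset.mem_singleton.1 hx, Finset.mem_singleton.1 hy]

lemma DynkinAdj.symm {β β' : E} (h : DynkinAdj β β') : DynkinAdj β' β :=
  ⟨h.1.symm, by rw [real_inner_comm]; exact h.2⟩

lemma DynkinConnected.insert_adj {C : Finset E} (hC : DynkinConnected C) {γ δ : E} (hδ : δ ∈ C)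
    (hadj : DynkinAdj γ δ) : DynkinConnected (insert γ C) := by
  have hγ := Finset.mem_insert_self γ C
  have hδ' : δ ∈ insert γ C := Finset.mem_insert_of_mem hδ
  have hpath : ∀ {x y}, x ∈ C → y ∈ C →
      Relation.ReflTransGen (fun a b => a ∈ insert γ C ∧ b ∈ insert γ C ∧ DynkinAdj a b) x y :=
    fun hx hy => Relation.ReflTransGen.mono (fun a b h => ⟨Finset.mem_insert_of_mem h.1,
      Finset.mem_insert_of_mem h.2.1, h.2.2⟩) _ _ (hC _ hx _ hy)
  intro x hx y hy
  rcases Finset.mem_insert.1 hx with rfl | hxC <;> rcases Finset.mem_insert.1 hy with rfl | hyC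
  · rfl
  · exact .head ⟨hγ, hδ', hadj⟩ (hpath hδ hyC)
  · exact .tail (hpath hxC hδ) ⟨hδ', hγ, hadj.symm⟩
  · exact hpath hxC hyC

def ReachableVia (ΔP : Finset E) (e : E → ℕ) (β : E) : Prop :=
  ∃ γ, 0 < e γ ∧ Relation.ReflTransGen (fun a b => b ∈ ΔP ∧ DynkinAdj a b) γ β

lemma reachableVia_add {ΔP : Finset E} {e e' : E → ℕ} {β : E} :
    ReachableVia ΔP (e + e') β ↔ ReachableVia ΔP e β ∨ ReachableVia ΔP e' β := by
  simp only [ReachableVia, Pi.add_apply, Nat.add_pos_iff_pos_or_pos, or_and_right, exists_or]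

/-- The witness is the last vertex of the path outside `Δ_P`. -/
lemma exists_reflTransGen_of_notMem {A ΔP : Finset E} {x y : E} (hx : x ∈ A) (hxP : x ∉ ΔP)
    (h : Relation.ReflTransGen (fun a b => a ∈ A ∧ b ∈ A ∧ DynkinAdj a b) x y) :
    ∃ γ ∈ A, γ ∉ ΔP ∧ Relation.ReflTransGen (fun a b => b ∈ ΔP ∧ DynkinAdj a b) γ y := by
  induction h with
  | refl => exact ⟨x, hx, hxP, .refl⟩
  | @tail b c _ hbc ih =>
    obtain ⟨γ, hγ, hγP, hpath⟩ := ih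
    by_cases hcP : c ∈ ΔP
    · exact ⟨γ, hγ, hγP, hpath.tail ⟨hcP, hbc.2.2⟩⟩
    · exact ⟨c, hbc.2.1, hcP, .refl⟩

end

namespace RootSystemData

variable {E : Type} [NormedAddCommGroup E] [InnerProductSpace ℝ E] [FiniteDimensional ℝ E]
  (S : RootSystemData E)

variable {S} in
lemma ne_zero_of_mem {α : E} (hα : α ∈ S.R) : α ≠ 0 :=
  fun h => S.zero_not_mem (h ▸ hα)

lemma mem_R_of_mem_simples {β : E} (hβ : β ∈ S.simples) : β ∈ S.R :=
  S.pos_subset (S.simples_subset hβ)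

lemma inner_self_pos {α : E} (hα : α ∈ S.R) : 0 < ⟪α, α⟫ :=
  real_inner_self_pos.2 (S.ne_zero_of_mem hα)

lemma real_inner_lt_norm_mul_norm {α γ : E} (hα : α ∈ S.R) (hγ : γ ∈ S.R) (hne : α ≠ γ) :
    ⟪α, γ⟫ < ‖α‖ * ‖γ‖ := by
  refine (real_inner_le_norm α γ).lt_of_ne fun h => hne ?_
  have hα0 : ‖α‖ ≠ 0 := norm_ne_zero_iff.2 (S.ne_zero_of_mem hα)
  have hγ0 : ‖γ‖ ≠ 0 := norm_ne_zero_iff.2 (S.ne_zero_of_mem hγ)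
  obtain ⟨-, r, hr, rfl⟩ :=
    (real_inner_div_norm_mul_norm_eq_one_iff α γ).1 (by rw [h, div_self (mul_ne_zero hα0 hγ0)])
  rcases S.reduced α hα r hγ with rfl | rfl
  · exact (one_smul ℝ α).symm
  · norm_num at hr

/-- Both Cartan integers `⟪α, γ^∨⟫`, `⟪γ, α^∨⟫` are positive integers with product
`< 4` (strict Cauchy–Schwarz), so one of them is `1` and the corresponding reflection
gives `±(α - γ)`. -/
lemma sub_mem_of_real_inner_pos {α γ : E} (hα : α ∈ S.R) (hγ : γ ∈ S.R)
    (hpos : 0 < ⟪α, γ⟫) (hne : α ≠ γ) : α - γ ∈ S.R := by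
  obtain ⟨m, hm⟩ := S.crystallographic γ hγ α hα
  obtain ⟨p, hp⟩ := S.crystallographic α hα γ hγ
  have hγγ := S.inner_self_pos hγ
  have hαα := S.inner_self_pos hα
  rw [real_inner_coroot] at hm hp
  rw [real_inner_comm] at hp
  have hm0 : 0 < m := Int.cast_pos.1 (hm ▸ by positivity : (0 : ℝ) < m)
  have hp0 : 0 < p := Int.cast_pos.1 (hp ▸ by positivity : (0 : ℝ) < p)
  by_cases hm1 : m = 1
  · have h := S.refl_mem γ hγ α hα
    rwa [sRefl_apply, real_inner_coroot, hm, hm1, Int.cast_one, one_smul] at h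
  by_cases hp1 : p = 1
  · have h := S.neg_mem _ (S.refl_mem α hα γ hγ)
    rw [sRefl_apply, real_inner_coroot, real_inner_comm, hp, hp1] at h
    simpa using h
  exfalso
  have hm2 : (2 : ℝ) ≤ m := by exact_mod_cast (by omega : (2 : ℤ) ≤ m)
  have hp2 : (2 : ℝ) ≤ p := by exact_mod_cast (by omega : (2 : ℤ) ≤ p)
  rw [div_eq_iff hγγ.ne'] at hm
  rw [div_eq_iff hαα.ne'] at hp
  have hlt := S.real_inner_lt_norm_mul_norm hα hγ hne
  rw [real_inner_self_eq_norm_sq] at hm hp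
  have hγa : ‖γ‖ ^ 2 ≤ ⟪α, γ⟫ := by nlinarith
  have hαa : ‖α‖ ^ 2 ≤ ⟪α, γ⟫ := by nlinarith
  nlinarith [mul_le_mul hγa hαa (sq_nonneg ‖α‖) hpos.le,
    mul_self_lt_mul_self hpos.le hlt]

lemma span_simples : Submodule.span ℝ (S.simples : Set E) = ⊤ := by
  refine eq_top_iff.2 (S.span_top ▸ Submodule.span_le.2 fun α hα => ?_)
  have hsum : ∀ {x : E}, x ∈ S.pos → x ∈ Submodule.span ℝ (S.simples : Set E) := by
    intro x hx
    obtain ⟨c, rfl⟩ := (S.pos_iff x (S.pos_subset hx)).1 hx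
    exact Submodule.sum_mem _ fun β hβ => Submodule.smul_mem _ _ (Submodule.subset_span hβ)
  rcases S.pos_or_neg α hα with h | h
  · exact hsum h
  · simpa using Submodule.neg_mem _ (hsum h)

noncomputable def simpleBasis : Module.Basis S.simples ℝ E :=
  Module.Basis.mk S.lin_indep <| by
    rw [Subtype.range_coe_subtype, Finset.setOfPred_mem, S.span_simples]

noncomputable def coeff (β : E) : E →ₗ[ℝ] ℝ :=
  if h : β ∈ S.simples then S.simpleBasis.coord ⟨β, h⟩ else 0

lemma sum_coeff_smul (x : E) : ∑ β ∈ S.simples, S.coeff β x • β = x := by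
  conv_rhs => rw [← S.simpleBasis.sum_repr x]
  rw [← Finset.sum_coe_sort]
  refine Finset.sum_congr rfl fun β _ => ?_
  simp [coeff, simpleBasis]

lemma coeff_simple {β δ : E} (hβ : β ∈ S.simples) (hδ : δ ∈ S.simples) :
    S.coeff β δ = if β = δ then 1 else 0 := by
  have : S.simpleBasis ⟨δ, hδ⟩ = δ := by simp [simpleBasis]
  rw [coeff, dif_pos hβ, ← this, Module.Basis.coord_apply, Module.Basis.repr_self,
    Finsupp.single_apply, this]
  simp [Subtype.ext_iff, eq_comm]

lemma coeff_sum_smul (c : E → ℝ) {β : E} (hβ : β ∈ S.simples) :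
    S.coeff β (∑ δ ∈ S.simples, c δ • δ) = c β := by
  simp only [map_sum, map_smul, smul_eq_mul]
  rw [Finset.sum_eq_single β (fun δ hδ hne => by simp [S.coeff_simple hβ hδ, Ne.symm hne])
    (fun h => absurd hβ h), S.coeff_simple hβ hβ, if_pos rfl, mul_one]

lemma nonnegComb_iff (x : E) :
    nonnegComb S.simples x ↔ ∀ β ∈ S.simples, ∃ n : ℕ, S.coeff β x = n := by
  constructor
  · rintro ⟨c, rfl⟩ β hβ
    exact ⟨c β, S.coeff_sum_smul _ hβ⟩
  · intro h
    refine ⟨fun β => ⌊S.coeff β x⌋₊, ?_⟩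
    conv_lhs => rw [← S.sum_coeff_smul x]
    refine Finset.sum_congr rfl fun β hβ => ?_
    obtain ⟨n, hn⟩ := h β hβ
    simp only [hn, Nat.floor_natCast]

lemma exists_coeff_eq_natCast {α : E} (hα : α ∈ S.pos) {β : E} (hβ : β ∈ S.simples) :
    ∃ n : ℕ, S.coeff β α = n :=
  (S.nonnegComb_iff α).1 ((S.pos_iff α (S.pos_subset hα)).1 hα) β hβ

lemma coeff_nonneg {α : E} (hα : α ∈ S.pos) (β : E) : 0 ≤ S.coeff β α := by
  by_cases hβ : β ∈ S.simples
  · obtain ⟨n, hn⟩ := S.exists_coeff_eq_natCast hα hβ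
    exact hn ▸ n.cast_nonneg
  · simp [coeff, hβ]

lemma mem_pos_of_coeff_nonneg {μ : E} (hμ : μ ∈ S.R) (h : ∀ β ∈ S.simples, 0 ≤ S.coeff β μ) :
    μ ∈ S.pos := by
  refine (S.pos_or_neg μ hμ).resolve_right fun hneg => S.ne_zero_of_mem hμ ?_
  rw [← S.sum_coeff_smul μ]
  refine Finset.sum_eq_zero fun β hβ => ?_
  have := S.coeff_nonneg hneg β
  rw [map_neg] at this
  rw [le_antisymm (by linarith) (h β hβ), zero_smul]

lemma notMem_R_of_coeff_pos_of_coeff_neg {x β γ : E} (hβ : 0 < S.coeff β x)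
    (hγ : S.coeff γ x < 0) : x ∉ S.R := fun hx => by
  rcases S.pos_or_neg x hx with h | h
  · exact hγ.not_ge (S.coeff_nonneg h γ)
  · have := S.coeff_nonneg h β
    rw [map_neg] at this
    linarith

lemma coeff_sub_simple {β : E} (hβ : β ∈ S.simples) (x : E) {δ : E} (hδ : δ ∈ S.simples) :
    S.coeff δ (x - β) = S.coeff δ x - if δ = β then 1 else 0 := by
  rw [map_sub, S.coeff_simple hδ hβ]

lemma real_inner_simples_nonpos {β γ : E} (hβ : β ∈ S.simples) (hγ : γ ∈ S.simples)
    (hne : β ≠ γ) : ⟪β, γ⟫ ≤ 0 := by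
  have hβR := S.mem_R_of_mem_simples hβ
  have hγR := S.mem_R_of_mem_simples hγ
  refine not_lt.1 fun hpos => S.notMem_R_of_coeff_pos_of_coeff_neg (β := β) (γ := γ) ?_ ?_
    (S.sub_mem_of_real_inner_pos hβR hγR hpos hne)
  · simp [S.coeff_sub_simple hγ _ hβ, S.coeff_simple hβ hβ, hne]
  · simp [S.coeff_sub_simple hγ _ hγ, S.coeff_simple hγ hβ, Ne.symm hne]

lemma one_le_coeff_of_mem_suppR {α β : E} (h : β ∈ suppR S α) : 1 ≤ S.coeff β α := by
  obtain ⟨hβ, hle⟩ := Finset.mem_filter.1 h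
  obtain ⟨n, hn⟩ := (S.nonnegComb_iff _).1 hle β hβ
  rw [S.coeff_sub_simple hβ _ hβ, if_pos rfl] at hn
  linarith [n.cast_nonneg (α := ℝ)]

lemma mem_suppR_iff {α : E} (hα : α ∈ S.pos) {β : E} :
    β ∈ suppR S α ↔ β ∈ S.simples ∧ 0 < S.coeff β α := by
  refine ⟨fun h => ⟨Finset.mem_filter.1 h |>.1,
    zero_lt_one.trans_le (S.one_le_coeff_of_mem_suppR h)⟩, fun ⟨hβ, hpos⟩ => ?_⟩
  refine Finset.mem_filter.2 ⟨hβ, (S.nonnegComb_iff _).2 fun δ hδ => ?_⟩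
  obtain ⟨n, hn⟩ := S.exists_coeff_eq_natCast hα hδ
  rw [S.coeff_sub_simple hβ _ hδ, hn]
  split_ifs with hδβ
  · subst hδβ
    refine ⟨n - 1, ?_⟩
    have : 1 ≤ n := by exact_mod_cast (hn ▸ hpos : (0 : ℝ) < n)
    push_cast [this]
    ring
  · exact ⟨n, sub_zero _⟩

lemma suppR_subset_simples (α : E) : suppR S α ⊆ S.simples := Finset.filter_subset _ _

lemma coeff_eq_zero_of_notMem_suppR {α : E} (hα : α ∈ S.pos) {β : E} (hβ : β ∉ suppR S α) :
    S.coeff β α = 0 := by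
  by_cases hβs : β ∈ S.simples
  · exact le_antisymm (not_lt.1 fun h => hβ ((S.mem_suppR_iff hα).2 ⟨hβs, h⟩))
      (S.coeff_nonneg hα β)
  · simp [coeff, hβs]

lemma suppR_nonempty {α : E} (hα : α ∈ S.pos) : (suppR S α).Nonempty := by
  refine Finset.nonempty_iff_ne_empty.2 fun h => S.ne_zero_of_mem (S.pos_subset hα) ?_
  rw [← S.sum_coeff_smul α]
  exact Finset.sum_eq_zero fun β _ => by
    rw [S.coeff_eq_zero_of_notMem_suppR hα (h ▸ Finset.notMem_empty β), zero_smul]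

lemma suppR_of_mem_simples {β : E} (hβ : β ∈ S.simples) : suppR S β = {β} := by
  ext δ
  rw [S.mem_suppR_iff (S.simples_subset hβ), Finset.mem_singleton]
  constructor
  · rintro ⟨hδ, hpos⟩
    by_contra hne
    simp [S.coeff_simple hδ hβ, hne] at hpos
  · rintro rfl
    simp [hβ, S.coeff_simple hβ hβ]

lemma real_inner_eq_sum_coeff (x y : E) :
    ⟪x, y⟫ = ∑ δ ∈ S.simples, S.coeff δ y * ⟪x, δ⟫ := by
  conv_lhs => rw [← S.sum_coeff_smul y]
  simp only [inner_sum, real_inner_smul_right]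

lemma coeff_mul_real_inner_nonpos {γ μ : E} (hγ : γ ∈ S.simples) (hμ : μ ∈ S.pos)
    (hγμ : γ ∉ suppR S μ) {δ : E} (hδ : δ ∈ S.simples) : S.coeff δ μ * ⟪γ, δ⟫ ≤ 0 := by
  by_cases hδγ : δ = γ
  · rw [hδγ, S.coeff_eq_zero_of_notMem_suppR hμ hγμ, zero_mul]
  · exact mul_nonpos_of_nonneg_of_nonpos (S.coeff_nonneg hμ δ)
      (S.real_inner_simples_nonpos hγ hδ (Ne.symm hδγ))

lemma real_inner_nonpos_of_notMem_suppR {γ μ : E} (hγ : γ ∈ S.simples) (hμ : μ ∈ S.pos)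
    (hγμ : γ ∉ suppR S μ) : ⟪γ, μ⟫ ≤ 0 := by
  rw [S.real_inner_eq_sum_coeff]
  exact Finset.sum_nonpos fun δ hδ => S.coeff_mul_real_inner_nonpos hγ hμ hγμ hδ

lemma real_inner_neg_iff_of_notMem_suppR {γ μ : E} (hγ : γ ∈ S.simples) (hμ : μ ∈ S.pos)
    (hγμ : γ ∉ suppR S μ) : ⟪γ, μ⟫ < 0 ↔ ∃ δ ∈ suppR S μ, ⟪γ, δ⟫ ≠ 0 := by
  rw [(S.real_inner_nonpos_of_notMem_suppR hγ hμ hγμ).lt_iff_ne, Ne, S.real_inner_eq_sum_coeff,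
    Finset.sum_eq_zero_iff_of_nonpos fun δ hδ => S.coeff_mul_real_inner_nonpos hγ hμ hγμ hδ]
  push Not
  refine exists_congr fun δ => ⟨fun ⟨hδ, h⟩ => ?_, fun ⟨hδ, h⟩ => ?_⟩
  · have hc := left_ne_zero_of_mul h
    exact ⟨(S.mem_suppR_iff hμ).2 ⟨hδ, (S.coeff_nonneg hμ δ).lt_of_ne' hc⟩,
      right_ne_zero_of_mul h⟩
  · obtain ⟨hδs, hc⟩ := (S.mem_suppR_iff hμ).1 hδ
    exact ⟨hδs, mul_ne_zero hc.ne' h⟩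

lemma mem_posP_iff {ΔP : Finset E} (hΔP : ΔP ⊆ S.simples) {α : E} (hα : α ∈ S.pos) :
    α ∈ posP S ΔP ↔ suppR S α ⊆ ΔP := by
  rw [posP, Finset.mem_filter, and_iff_right hα]
  constructor
  · rintro ⟨c, hc⟩ β hβ
    by_contra hβP
    have h0 : S.coeff β α = 0 := by
      rw [hc, map_sum]
      refine Finset.sum_eq_zero fun δ hδ => ?_
      rw [map_smul, S.coeff_simple (S.suppR_subset_simples α hβ) (hΔP hδ),
        if_neg fun h : β = δ => hβP (h ▸ hδ), smul_zero]
    exact ((S.mem_suppR_iff hα).1 hβ).2.ne' h0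
  · intro hsupp
    refine ⟨fun β => ⌊S.coeff β α⌋₊, ?_⟩
    have hvanish : ∀ β ∈ S.simples, β ∉ ΔP → S.coeff β α • β = 0 := fun β _ hβP => by
      rw [S.coeff_eq_zero_of_notMem_suppR hα fun h => hβP (hsupp h), zero_smul]
    conv_lhs => rw [← S.sum_coeff_smul α, ← Finset.sum_subset hΔP hvanish]
    refine Finset.sum_congr rfl fun β hβ => ?_
    obtain ⟨n, hn⟩ := S.exists_coeff_eq_natCast hα (hΔP hβ)
    simp [hn]

lemma coeff_sRefl {β δ : E} (hβ : β ∈ S.simples) (hδ : δ ∈ S.simples) (x : E) :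
    S.coeff δ (sRefl β x) = S.coeff δ x - if δ = β then ⟪x, coroot β⟫ else 0 := by
  rw [sRefl_apply, map_sub, map_smul, S.coeff_simple hδ hβ, smul_eq_mul, mul_ite, mul_one,
    mul_zero]

lemma corootCoeffs_spec {α : E} (hα : α ∈ S.pos) :
    (∀ β ∉ S.simples, corootCoeffs S α β = 0) ∧
      coroot α = ∑ β ∈ S.simples, (corootCoeffs S α β : ℝ) • coroot β := by
  obtain ⟨c, hc⟩ := S.coroot_comb α hα
  have h : ∃ c : E → ℕ, (∀ β, β ∉ S.simples → c β = 0) ∧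
      coroot α = ∑ β ∈ S.simples, (c β : ℝ) • coroot β := by
    refine ⟨fun β => if β ∈ S.simples then c β else 0, fun β hβ => by simp [hβ], ?_⟩
    rw [hc]
    exact Finset.sum_congr rfl fun β hβ => by simp [hβ]
  rw [corootCoeffs, dif_pos h]
  exact h.choose_spec

lemma corootCoeffs_mul {α δ : E} (hα : α ∈ S.pos) (hδ : δ ∈ S.simples) :
    (corootCoeffs S α δ : ℝ) * (2 / ⟪δ, δ⟫) = 2 / ⟪α, α⟫ * S.coeff δ α := by
  have h := congrArg (S.coeff δ) (S.corootCoeffs_spec hα).2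
  simp only [coroot, smul_smul] at h
  rwa [map_smul, smul_eq_mul, S.coeff_sum_smul _ hδ, eq_comm] at h

lemma corootCoeffs_pos_iff {α δ : E} (hα : α ∈ S.pos) :
    0 < corootCoeffs S α δ ↔ δ ∈ suppR S α := by
  by_cases hδ : δ ∈ S.simples
  · have hδδ := S.inner_self_pos (S.mem_R_of_mem_simples hδ)
    have hαα := S.inner_self_pos (S.pos_subset hα)
    rw [S.mem_suppR_iff hα, and_iff_right hδ, ← Nat.cast_pos (α := ℝ),
      ← mul_pos_iff_of_pos_right (show (0 : ℝ) < 2 / ⟪δ, δ⟫ by positivity),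
      S.corootCoeffs_mul hα hδ, mul_pos_iff_of_pos_left (by positivity)]
  · simpa [(S.corootCoeffs_spec hα).1 δ hδ] using mt (S.suppR_subset_simples α ·) hδ

lemma degOf_pos_iff {ΔP : Finset E} {α β : E} (hα : α ∈ S.pos) :
    0 < degOf S ΔP α β ↔ β ∉ ΔP ∧ β ∈ suppR S α := by
  unfold degOf
  split_ifs with hβP <;> simp [hβP, S.corootCoeffs_pos_iff hα]

lemma degOf_sRefl {ΔP : Finset E} {α β : E} (hβP : β ∈ ΔP) (hβ : β ∈ S.simples)
    (hα : α ∈ S.pos) (hα' : sRefl β α ∈ S.pos) : degOf S ΔP (sRefl β α) = degOf S ΔP α := by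
  funext δ
  unfold degOf
  split_ifs with hδP
  · rfl
  by_cases hδ : δ ∈ S.simples
  · have hδδ := S.inner_self_pos (S.mem_R_of_mem_simples hδ)
    have h := S.corootCoeffs_mul hα' hδ
    rw [LinearIsometryEquiv.inner_map_map, S.coeff_sRefl hβ hδ,
      if_neg fun h : δ = β => hδP (h ▸ hβP), sub_zero, ← S.corootCoeffs_mul hα hδ] at h
    exact_mod_cast mul_right_cancel₀ (by positivity) h
  · rw [(S.corootCoeffs_spec hα).1 δ hδ, (S.corootCoeffs_spec hα').1 δ hδ]

variable {S} in
/-- Otherwise `s_β α` would have the same degree as `α` and lie strictly above it. -/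
lemma _root_.IsMaxRoot.mem_suppR {ΔP : Finset E} (hΔP : ΔP ⊆ S.simples) {e : E → ℕ} {α : E}
    (hmax : IsMaxRoot S ΔP e α) {β δ : E} (hβP : β ∈ ΔP) (hδ : δ ∈ suppR S α)
    (hβδ : ⟪β, δ⟫ ≠ 0) : β ∈ suppR S α := by
  by_contra hβα
  obtain ⟨hαpos, hαP, hdeg, hmaximal⟩ := hmax
  have hβ := hΔP hβP
  have hβR := S.mem_R_of_mem_simples hβ
  obtain ⟨n, hn⟩ := S.crystallographic β hβR α (S.pos_subset hαpos)
  have hn0 : (n : ℝ) < 0 := by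
    have := (S.real_inner_neg_iff_of_notMem_suppR hβ hαpos hβα).2 ⟨δ, hδ, hβδ⟩
    rw [← hn, real_inner_coroot, real_inner_comm]
    exact div_neg_of_neg_of_pos (by linarith) (S.inner_self_pos hβR)
  set α' := sRefl β α
  have hcoeff : ∀ γ ∈ S.simples, S.coeff γ α' = S.coeff γ α - if γ = β then (n : ℝ) else 0 :=
    fun γ hγ => hn ▸ S.coeff_sRefl hβ hγ α
  have hle : ∀ γ ∈ S.simples, S.coeff γ α ≤ S.coeff γ α' := fun γ hγ => by
    rw [hcoeff γ hγ]
    split_ifs <;> linarith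
  have hα'pos : α' ∈ S.pos :=
    S.mem_pos_of_coeff_nonneg (S.refl_mem β hβR α (S.pos_subset hαpos))
      fun γ hγ => (S.coeff_nonneg hαpos γ).trans (hle γ hγ)
  have hsupp : suppR S α ⊆ suppR S α' := fun γ hγ => by
    obtain ⟨hγs, hpos⟩ := (S.mem_suppR_iff hαpos).1 hγ
    exact (S.mem_suppR_iff hα'pos).2 ⟨hγs, hpos.trans_le (hle γ hγs)⟩
  have hα'P : α' ∉ posP S ΔP := fun h => hαP <| (S.mem_posP_iff hΔP hαpos).2 <|
    hsupp.trans ((S.mem_posP_iff hΔP hα'pos).1 h)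
  have hαα' : rootLE S α α' := by
    obtain ⟨k, rfl⟩ := Int.exists_eq_neg_ofNat (by exact_mod_cast hn0.le : n ≤ 0)
    refine (S.nonnegComb_iff _).2 fun γ hγ => ?_
    rw [map_sub, hcoeff γ hγ]
    split_ifs
    · exact ⟨k, by push_cast; ring⟩
    · exact ⟨0, by simp⟩
  have hne : α' ≠ α := fun h => by
    have := hcoeff β hβ
    rw [h, if_pos rfl] at this
    linarith
  exact hne (hmaximal α' hα'pos hα'P (S.degOf_sRefl hβP hβ hαpos hα'pos ▸ hdeg) hαα')

lemma exists_sub_mem_pos {α : E} (hα : α ∈ S.pos) (hαs : α ∉ S.simples) :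
    ∃ γ ∈ suppR S α, α - γ ∈ S.pos := by
  have hαR := S.pos_subset hα
  obtain ⟨γ, hγ, hterm⟩ : ∃ γ ∈ S.simples, 0 < S.coeff γ α * ⟪α, γ⟫ := by
    by_contra! h
    have := S.inner_self_pos hαR
    rw [S.real_inner_eq_sum_coeff] at this
    exact (Finset.sum_nonpos h).not_gt this
  have hγα : 0 < ⟪α, γ⟫ := pos_of_mul_pos_right hterm (S.coeff_nonneg hα γ)
  have hγsupp : γ ∈ suppR S α := (S.mem_suppR_iff hα).2
    ⟨hγ, pos_of_mul_pos_left hterm hγα.le⟩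
  refine ⟨γ, hγsupp, S.mem_pos_of_coeff_nonneg ?_ fun δ hδ => ?_⟩
  · exact S.sub_mem_of_real_inner_pos hαR (S.mem_R_of_mem_simples hγ) hγα
      fun h => hαs (h ▸ hγ)
  · rw [S.coeff_sub_simple hγ _ hδ]
    split_ifs with hδγ
    · exact sub_nonneg.2 (hδγ ▸ S.one_le_coeff_of_mem_suppR hγsupp)
    · exact (sub_zero (S.coeff δ α)).symm ▸ S.coeff_nonneg hα δ

lemma suppR_eq_insert_suppR_sub {α γ : E} (hα : α ∈ S.pos) (hγ : γ ∈ suppR S α)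
    (hαγ : α - γ ∈ S.pos) : suppR S α = insert γ (suppR S (α - γ)) := by
  have hγs := S.suppR_subset_simples α hγ
  ext δ
  rw [Finset.mem_insert, S.mem_suppR_iff hα, S.mem_suppR_iff hαγ]
  by_cases hδγ : δ = γ
  · subst hδγ
    simp [hγs, (S.mem_suppR_iff hα).1 hγ]
  · simp only [hδγ, false_or]
    by_cases hδ : δ ∈ S.simples
    · rw [S.coeff_sub_simple hγs _ hδ, if_neg hδγ, sub_zero]
    · simp [hδ]

/-- If `γ` is orthogonal to `μ = α - γ`, then `s_γ α = μ - γ`, whose coefficients have mixed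
signs. -/
lemma real_inner_sub_neg {α γ : E} (hα : α ∈ S.R) (hγ : γ ∈ S.simples) (hμ : α - γ ∈ S.pos)
    (hγμ : γ ∉ suppR S (α - γ)) : ⟪γ, α - γ⟫ < 0 := by
  refine (S.real_inner_nonpos_of_notMem_suppR hγ hμ hγμ).lt_of_ne fun h0 => ?_
  obtain ⟨δ, hδ⟩ := S.suppR_nonempty hμ
  have hδγ : δ ≠ γ := fun h => hγμ (h ▸ hδ)
  have hcoroot : ⟪α, coroot γ⟫ = 2 := by
    rw [inner_sub_right, sub_eq_zero, real_inner_comm] at h0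
    rw [real_inner_coroot, h0, mul_div_assoc,
      div_self (S.inner_self_pos (S.mem_R_of_mem_simples hγ)).ne', mul_one]
  have hrefl : sRefl γ α = α - γ - γ := by
    rw [sRefl_apply, hcoroot, two_smul]
    abel
  refine S.notMem_R_of_coeff_pos_of_coeff_neg (β := δ) (γ := γ) ?_ ?_
    (hrefl ▸ S.refl_mem γ (S.mem_R_of_mem_simples hγ) α hα)
  · rw [S.coeff_sub_simple hγ _ (S.suppR_subset_simples _ hδ), if_neg hδγ, sub_zero]
    exact ((S.mem_suppR_iff hμ).1 hδ).2
  · rw [S.coeff_sub_simple hγ _ hγ, if_pos rfl, S.coeff_eq_zero_of_notMem_suppR hμ hγμ]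
    norm_num

/-- Induction on the height: `Δ(α) = {γ} ∪ Δ(α - γ)`, and a new `γ` is joined to
`Δ(α - γ)` by `real_inner_sub_neg`. -/
lemma dynkinConnected_suppR {α : E} (hα : α ∈ S.pos) : DynkinConnected (suppR S α) := by
  obtain ⟨n, hn⟩ : ∃ n : ℕ, ∑ δ ∈ S.simples, S.coeff δ α ≤ n := exists_nat_ge _
  induction n generalizing α with
  | zero =>
    intro β hβ
    rw [Nat.cast_zero] at hn
    have := Finset.single_le_sum (fun δ _ => S.coeff_nonneg hα δ) (S.suppR_subset_simples α hβ)
    linarith [S.one_le_coeff_of_mem_suppR hβ]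
  | succ n ih =>
    by_cases hαs : α ∈ S.simples
    · rw [S.suppR_of_mem_simples hαs]
      exact dynkinConnected_singleton α
    obtain ⟨γ, hγ, hμ⟩ := S.exists_sub_mem_pos hα hαs
    have hγs := S.suppR_subset_simples α hγ
    have hconn : DynkinConnected (suppR S (α - γ)) := by
      refine ih hμ ?_
      have hγ1 : ∑ δ ∈ S.simples, S.coeff δ γ = 1 := by
        rw [Finset.sum_congr rfl fun δ hδ => S.coeff_simple hδ hγs, Finset.sum_ite_eq',
          if_pos hγs]
      rw [Nat.cast_succ] at hn
      simp only [map_sub, Finset.sum_sub_distrib, hγ1]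
      linarith
    rw [S.suppR_eq_insert_suppR_sub hα hγ hμ]
    by_cases hγμ : γ ∈ suppR S (α - γ)
    · rwa [Finset.insert_eq_of_mem hγμ]
    obtain ⟨δ, hδ, hγδ⟩ := (S.real_inner_neg_iff_of_notMem_suppR hγs hμ hγμ).1
      (S.real_inner_sub_neg (S.pos_subset hα) hγs hμ hγμ)
    exact hconn.insert_adj hδ ⟨fun h => hγμ (h ▸ hδ), hγδ⟩

end RootSystemData

section

variable {E : Type} [NormedAddCommGroup E] [InnerProductSpace ℝ E] [FiniteDimensional ℝ E]
  {S : RootSystemData E} {ΔP : Finset E}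

lemma mem_extSuppOf {l : List E} {β : E} : β ∈ extSuppOf S l ↔ ∃ α ∈ l, β ∈ suppR S α := by
  induction l with
  | nil => simp [extSuppOf]
  | cons a t ih =>
    rw [show extSuppOf S (a :: t) = suppR S a ∪ extSuppOf S t from rfl, Finset.mem_union, ih]
    simp

lemma IsGreedy.exists_isMaxRoot {l : List E} {e : E → ℕ} (hg : IsGreedy S ΔP l e) {α : E}
    (hα : α ∈ l) : ∃ e' ≤ e, IsMaxRoot S ΔP e' α := by
  induction l generalizing e with
  | nil => simp at hα
  | cons a t ih =>
    rcases List.mem_cons.1 hα with rfl | hαt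
    · exact ⟨e, le_rfl, hg.1⟩
    · obtain ⟨e', he', hmax⟩ := ih hg.2 hαt
      exact ⟨e', he'.trans tsub_le_self, hmax⟩

lemma IsGreedy.exists_degOf_pos {l : List E} {e : E → ℕ} (hg : IsGreedy S ΔP l e) {x : E}
    (hx : 0 < e x) : ∃ α ∈ l, 0 < degOf S ΔP α x := by
  induction l generalizing e with
  | nil => exact absurd (congrFun hg x ▸ hx) (lt_irrefl 0)
  | cons a t ih =>
    by_cases ha : 0 < degOf S ΔP a x
    · exact ⟨a, List.mem_cons_self, ha⟩
    · obtain ⟨α, hαt, hα⟩ := ih hg.2 (by simp only [Pi.sub_apply]; omega)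
      exact ⟨α, List.mem_cons_of_mem a hαt, hα⟩

lemma IsGreedy.mem_extSuppOf_iff (hΔP : ΔP ⊆ S.simples) {l : List E} {e : E → ℕ}
    (hg : IsGreedy S ΔP l e) {β : E} : β ∈ extSuppOf S l ↔ ReachableVia ΔP e β := by
  rw [mem_extSuppOf]
  constructor
  · rintro ⟨α, hαl, hβ⟩
    obtain ⟨e', he', hαpos, hαP, hdeg, -⟩ := hg.exists_isMaxRoot hαl
    obtain ⟨x, hx, hxP⟩ := Finset.not_subset.1 fun h => hαP ((S.mem_posP_iff hΔP hαpos).2 h)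
    obtain ⟨γ, hγ, hγP, hpath⟩ :=
      exists_reflTransGen_of_notMem hx hxP (S.dynkinConnected_suppR hαpos x hx β hβ)
    exact ⟨γ, ((S.degOf_pos_iff hαpos).2 ⟨hγP, hγ⟩).trans_le ((hdeg γ).trans (he' γ)), hpath⟩
  · rintro ⟨γ, hγ, hpath⟩
    induction hpath with
    | refl =>
      obtain ⟨α, hαl, hpos⟩ := hg.exists_degOf_pos hγ
      obtain ⟨_, -, hmax⟩ := hg.exists_isMaxRoot hαl
      exact ⟨α, hαl, ((S.degOf_pos_iff hmax.1).1 hpos).2⟩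
    | tail _ hbc ih =>
      obtain ⟨α, hαl, hb⟩ := ih
      obtain ⟨_, -, hmax⟩ := hg.exists_isMaxRoot hαl
      exact ⟨α, hαl, hmax.mem_suppR hΔP hbc.1 hb hbc.2.symm.2⟩

end

theorem statement5_general {E : Type} [NormedAddCommGroup E] [InnerProductSpace ℝ E]
    [FiniteDimensional ℝ E] (S : RootSystemData E) (ΔP : Finset E)
    (hΔP : ΔP ⊆ S.simples)
    (d d' : E → ℕ)
    (l l' m : List E) (hl : IsGreedy S ΔP l d) (hl' : IsGreedy S ΔP l' d')
    (hm : IsGreedy S ΔP m (d + d')) :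
    extSuppOf S m = extSuppOf S l ∪ extSuppOf S l' := by
  ext β
  rw [Finset.mem_union, hm.mem_extSuppOf_iff hΔP, hl.mem_extSuppOf_iff hΔP,
    hl'.mem_extSuppOf_iff hΔP, reachableVia_add]

/-- Addition theorem for extended supports: for any two degrees `d`
and `d'`, `Δ̃(d + d') = Δ̃(d) ∪ Δ̃(d')`. -/
theorem statement5 {E : Type} [NormedAddCommGroup E] [InnerProductSpace ℝ E]
    [FiniteDimensional ℝ E] (S : RootSystemData E) (ΔP : Finset E)
    (hΔP : ΔP ⊆ S.simples)
    (d d' : E → ℕ) (hd : IsDegree S ΔP d) (hd' : IsDegree S ΔP d')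
    (l l' m : List E) (hl : IsGreedy S ΔP l d) (hl' : IsGreedy S ΔP l' d')
    (hm : IsGreedy S ΔP m (d + d')) :
    extSuppOf S m = extSuppOf S l ∪ extSuppOf S l' :=
  statement5_general S ΔP hΔP d d' l l' m hl hl' hm
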